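/- arXiv:2206.01817 — 6 statements merged into one kernel-verified Lean document; each statement's English description precedes it below -/
import Mathlib

section
/- For every real number α > 0, the coefficient S₂,₋₁(α) = (α + 5c₀² − 2α c₀⁴ − c₀⁶ + α c₀⁸)/(4c₀²) is strictly positive, where c₀ = √(tanh α). -/
/-- `c₀ = √(tanh α)`, the leading-order wave speed. -/
noncomputable def c₀ (α : ℝ) : ℝ := Real.sqrt (Real.tanh α)

/-- For every real `α > 0`, the coefficient
`S₂,₋₁(α) = (α + 5c₀² − 2α c₀⁴ − c₀⁶ + α c₀⁸)/(4c₀²)` is strictly positive. -/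
theorem S2m1_pos (α : ℝ) (hα : 0 < α) :
    0 < (α + 5 * c₀ α ^ 2 - 2 * α * c₀ α ^ 4 - c₀ α ^ 6 + α * c₀ α ^ 8) /
        (4 * c₀ α ^ 2) := by
  have ht : 0 < Real.tanh α := by
    rw [Real.tanh_eq_sinh_div_cosh]
    exact div_pos (Real.sinh_pos_iff.mpr hα) (Real.cosh_pos α)
  have ht1 : Real.tanh α < 1 := by
    rw [Real.tanh_eq_sinh_div_cosh]
    exact (div_lt_one (Real.cosh_pos α)).mpr (Real.sinh_lt_cosh α)
  have hsq : c₀ α ^ 2 = Real.tanh α := Real.sq_sqrt ht.le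
  set t := Real.tanh α with htdef
  have h4 : c₀ α ^ 4 = t ^ 2 := by rw [show (4:ℕ) = 2*2 from rfl, pow_mul, hsq]
  have h6 : c₀ α ^ 6 = t ^ 3 := by rw [show (6:ℕ) = 2*3 from rfl, pow_mul, hsq]
  have h8 : c₀ α ^ 8 = t ^ 4 := by rw [show (8:ℕ) = 2*4 from rfl, pow_mul, hsq]
  rw [hsq, h4, h6, h8]
  apply div_pos
  · nlinarith [sq_nonneg (1 - t^2), mul_pos ht (mul_pos ht ht), mul_nonneg hα.le (sq_nonneg (1 - t^2))]
  · linarith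
end

section
/- For every real number α > 0, the coefficient T₂,₋₁(α) = (α² − c₀²(−1 + α c₀²)(−2α + c₀² + 3α c₀⁴))/(4c₀³) is strictly positive, where c₀ = √(tanh α). -/
/-- For every real `α > 0`, the coefficient
`T₂,₋₁(α) = (α² − c₀²(−1 + α c₀²)(−2α + c₀² + 3α c₀⁴))/(4c₀³)` is strictly positive. -/
theorem T2m1_pos (α : ℝ) (hα : 0 < α) :
    0 < (α ^ 2 - c₀ α ^ 2 * (-1 + α * c₀ α ^ 2) * (-2 * α + c₀ α ^ 2 + 3 * α * c₀ α ^ 4)) /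
        (4 * c₀ α ^ 3) := by
  have ht0 : 0 < Real.tanh α := by
    rw [Real.tanh_eq_sinh_div_cosh]
    exact div_pos (Real.sinh_pos_iff.mpr hα) (Real.cosh_pos α)
  have ht1 : Real.tanh α < 1 := by
    rw [Real.tanh_eq_sinh_div_cosh, div_lt_one (Real.cosh_pos α)]
    nlinarith [Real.cosh_sub_sinh α, Real.exp_pos (-α)]
  have hc2 : c₀ α ^ 2 = Real.tanh α := Real.sq_sqrt ht0.le
  have hc0 : 0 < c₀ α := Real.sqrt_pos.mpr ht0
  set t := Real.tanh α with htdef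
  apply div_pos
  · have h4 : c₀ α ^ 4 = t ^ 2 := by
      rw [show (4 : ℕ) = 2 * 2 from rfl, pow_mul, hc2]
    rw [hc2, h4]
    have h1 : 0 < 1 - t ^ 2 := by nlinarith
    have hA : 0 < (1 - t ^ 2) * (1 + 3 * t ^ 2) := by positivity
    have key : (1 - t ^ 2) * (1 + 3 * t ^ 2) *
        (α ^ 2 - t * (-1 + α * t) * (-2 * α + t + 3 * α * t ^ 2)) =
        ((1 - t ^ 2) * (1 + 3 * t ^ 2) * α - t * (1 - t ^ 2)) ^ 2
          + 4 * t ^ 4 * (1 - t ^ 2) := by ring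
    nlinarith [key, hA, sq_nonneg ((1 - t ^ 2) * (1 + 3 * t ^ 2) * α - t * (1 - t ^ 2)),
      mul_pos (mul_pos (by positivity : (0:ℝ) < 4 * t ^ 4) h1) hA, pow_pos ht0 4]
  · positivity
end

section
/- For every real number α > 0, the coefficient T₂,₀(α) = (α² − 2α c₀² + (1 − 2α²)c₀⁴ − 2α c₀⁶ + α² c₀⁸)/(4c₀²) is strictly negative, where c₀ = √(tanh α). -/
namespace Real

lemma tanh_pos {x : ℝ} (hx : 0 < x) : 0 < tanh x := by
  rw [tanh_eq_sinh_div_cosh]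
  exact div_pos (sinh_pos_iff.2 hx) (cosh_pos x)

/-- By the mean value theorem `sinh x = x cosh ξ` with `0 < ξ < x`, and `cosh` increases. -/
lemma sinh_lt_mul_cosh {x : ℝ} (hx : 0 < x) : sinh x < x * cosh x := by
  obtain ⟨ξ, ⟨hξ0, hξx⟩, hslope⟩ := exists_hasDerivAt_eq_slope sinh cosh hx
    continuous_sinh.continuousOn fun y _ => hasDerivAt_sinh y
  have hcosh : cosh ξ < cosh x := cosh_lt_cosh.2 (by rw [abs_of_pos hξ0, abs_of_pos hx]; exact hξx)
  rw [sinh_zero, sub_zero, sub_zero, eq_div_iff hx.ne'] at hslope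
  nlinarith

lemma tanh_lt_self {x : ℝ} (hx : 0 < x) : tanh x < x := by
  rw [tanh_eq_sinh_div_cosh, div_lt_iff₀ (cosh_pos x)]
  exact sinh_lt_mul_cosh hx

lemma mul_one_sub_tanh_sq_lt_tanh {x : ℝ} (hx : 0 < x) : x * (1 - tanh x ^ 2) < tanh x := by
  have hc := cosh_pos x
  have hsech : 1 - tanh x ^ 2 = 1 / cosh x ^ 2 := by
    rw [tanh_eq_sinh_div_cosh]
    field_simp
    linarith [cosh_sq x]
  have hdouble : x < sinh x * cosh x := by
    linarith [self_lt_sinh_iff.2 (by positivity : 0 < 2 * x), sinh_two_mul x]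
  rw [hsech, tanh_eq_sinh_div_cosh, mul_one_div, div_lt_div_iff₀ (by positivity) hc]
  nlinarith

end Real

lemma t20_numerator_neg {a t : ℝ} (ht0 : 0 < t) (ht1 : t < 1) (hta : t < a)
    (hat : a * (1 - t ^ 2) < t) :
    a ^ 2 - 2 * a * t + (1 - 2 * a ^ 2) * t ^ 2 - 2 * a * t ^ 3 + a ^ 2 * t ^ 4 < 0 := by
  have hu0 : 0 < a * (1 - t ^ 2) := mul_pos (ht0.trans hta) (by nlinarith)
  have hu : (a * (1 - t ^ 2)) ^ 2 < t ^ 2 := pow_lt_pow_left₀ hat hu0.le two_ne_zero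
  have ht : t ^ 2 < a * t * (1 + t ^ 2) := by nlinarith [sq_nonneg t]
  calc a ^ 2 - 2 * a * t + (1 - 2 * a ^ 2) * t ^ 2 - 2 * a * t ^ 3 + a ^ 2 * t ^ 4
      = (a * (1 - t ^ 2)) ^ 2 + t ^ 2 - 2 * (a * t * (1 + t ^ 2)) := by ring
    _ < 0 := by linarith

/-- For every real `α > 0`, the coefficient
`T₂,₀(α) = (α² − 2α c₀² + (1 − 2α²)c₀⁴ − 2α c₀⁶ + α² c₀⁸)/(4c₀²)` is strictly negative. -/
theorem T20_neg (α : ℝ) (hα : 0 < α) :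
    (α ^ 2 - 2 * α * c₀ α ^ 2 + (1 - 2 * α ^ 2) * c₀ α ^ 4 - 2 * α * c₀ α ^ 6
        + α ^ 2 * c₀ α ^ 8) / (4 * c₀ α ^ 2) < 0 := by
  have ht : 0 < Real.tanh α := Real.tanh_pos hα
  have hc : c₀ α ^ 2 = Real.tanh α := Real.sq_sqrt ht.le
  rw [show c₀ α ^ 4 = (c₀ α ^ 2) ^ 2 by ring, show c₀ α ^ 6 = (c₀ α ^ 2) ^ 3 by ring,
    show c₀ α ^ 8 = (c₀ α ^ 2) ^ 4 by ring, hc]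
  exact div_neg_of_neg_of_pos
    (t20_numerator_neg ht (Real.tanh_lt_one α) (Real.tanh_lt_self hα)
      (Real.mul_one_sub_tanh_sq_lt_tanh hα))
    (by positivity)
end

section
/- For every real number α > 0, substituting c₀ = √(tanh α) into T₂,₀(α) = (α² − 2α c₀² + (1 − 2α²)c₀⁴ − 2α c₀⁶ + α² c₀⁸)/(4c₀²) yields the identity T₂,₀(α) = −(1/64)·csch(α)·sech³(α)·(e^{4α} − (1 + 4α))·(e^{−4α} − (1 − 4α)). -/
/-- For every real `α > 0`,
`T₂,₀(α) = −(1/64)·csch(α)·sech³(α)·(e^{4α} − (1 + 4α))·(e^{−4α} − (1 − 4α))`. -/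
theorem T20_hyperbolic_form (α : ℝ) (hα : 0 < α) :
    (α ^ 2 - 2 * α * c₀ α ^ 2 + (1 - 2 * α ^ 2) * c₀ α ^ 4 - 2 * α * c₀ α ^ 6
        + α ^ 2 * c₀ α ^ 8) / (4 * c₀ α ^ 2)
      = -(1 / 64) * (Real.sinh α)⁻¹ * ((Real.cosh α)⁻¹) ^ 3
          * (Real.exp (4 * α) - (1 + 4 * α)) * (Real.exp (-(4 * α)) - (1 - 4 * α)) := by
  have ht : 0 ≤ Real.tanh α := by
    rw [Real.tanh_eq_sinh_div_cosh]
    exact div_nonneg (Real.sinh_nonneg_iff.mpr hα.le) (Real.cosh_pos α).le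
  have hc2 : c₀ α ^ 2 = Real.tanh α := Real.sq_sqrt ht
  have hc4 : c₀ α ^ 4 = Real.tanh α ^ 2 := by rw [show (4:ℕ) = 2*2 from rfl, pow_mul, hc2]
  have hc6 : c₀ α ^ 6 = Real.tanh α ^ 3 := by rw [show (6:ℕ) = 2*3 from rfl, pow_mul, hc2]
  have hc8 : c₀ α ^ 8 = Real.tanh α ^ 4 := by rw [show (8:ℕ) = 2*4 from rfl, pow_mul, hc2]
  rw [hc2, hc4, hc6, hc8, Real.tanh_eq_sinh_div_cosh, Real.sinh_eq, Real.cosh_eq,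
    Real.exp_neg, Real.exp_neg, show (4:ℝ) * α = (4:ℕ) * α by norm_num,
    Real.exp_nat_mul]
  push_cast
  have hE2 : 1 < Real.exp α := Real.one_lt_exp_iff.mpr hα
  generalize Real.exp α = E at hE2 ⊢
  have hE0 : (0:ℝ) < E := lt_trans one_pos hE2
  have hE1 : E ≠ 0 := hE0.ne'
  have h2 : E ^ 2 - 1 ≠ 0 := by nlinarith
  have h3 : E ^ 2 + 1 ≠ 0 := by positivity
  have hm : E * E⁻¹ = 1 := mul_inv_cancel₀ hE1
  have hs : E - E⁻¹ ≠ 0 := by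
    intro h; apply h2; nlinarith
  have hc : E + E⁻¹ ≠ 0 := by positivity
  have h5 : E * E - 1 ≠ 0 := fun h => h2 (by nlinarith)
  have h4 : E * E + 1 ≠ 0 := by positivity
  field_simp
  ring
end

section
/- Let α > 0 and suppose e_BW(α) > 0. Then the quantity Λ₃ᴿ^(M)(α) := (8 e_BW(α)/e₂(α)) · (c_g(α) A₃,₋₁(α) − B₃,₋₁(α)) satisfies Λ₃ᴿ^(M)(α) = −4 e_BW(α) < 0; in particular Λ₃ᴿ^(M)(α) ≠ 0. -/
/-- The group velocity `c_g(α) = (α(1 − c₀⁴) − c₀²)/(2c₀)`. -/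
noncomputable def cg (α : ℝ) : ℝ := (α * (1 - c₀ α ^ 4) - c₀ α ^ 2) / (2 * c₀ α)

/-- The third-order coefficient `A₃,₋₁(α) = 1 + α/c₀² − α c₀²`. -/
noncomputable def A3m1 (α : ℝ) : ℝ := 1 + α / c₀ α ^ 2 - α * c₀ α ^ 2

/-- The third-order coefficient `B₃,₋₁(α) = α(α − c₀² + c₀⁶ − α c₀⁸)/c₀³`. -/
noncomputable def B3m1 (α : ℝ) : ℝ :=
  α * (α - c₀ α ^ 2 + c₀ α ^ 6 - α * c₀ α ^ 8) / c₀ α ^ 3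

/-- The second-order coefficient
`T₂,₋₁(α) = (α² − c₀²(−1 + α c₀²)(−2α + c₀² + 3α c₀⁴))/(4c₀³)`. -/
noncomputable def T2m1 (α : ℝ) : ℝ :=
  (α ^ 2 - c₀ α ^ 2 * (-1 + α * c₀ α ^ 2) * (-2 * α + c₀ α ^ 2 + 3 * α * c₀ α ^ 4)) /
    (4 * c₀ α ^ 3)

/-- `e₂(α) = 4 T₂,₋₁(α)`. -/
noncomputable def e₂ (α : ℝ) : ℝ := 4 * T2m1 α

/-- The Benjamin-Whitham coefficient `e_BW(α)`. -/
noncomputable def eBW (α : ℝ) : ℝ :=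
  (-4 + 8 * α ^ 2 + 8 * Real.cosh (2 * α) + 5 * Real.cosh (4 * α)
    + 2 * α * (-9 * (Real.cosh α / Real.sinh α)
        + 18 * α * ((Real.sinh (2 * α))⁻¹) ^ 2
        - 2 * Real.sinh (4 * α) + 3 * Real.tanh α)) /
  ((-1 + 8 * α ^ 2 + Real.cosh (4 * α) - 4 * α * Real.sinh (4 * α))
    * Real.tanh α ^ ((3 : ℝ) / 2))

lemma tanh_pos' {α : ℝ} (hα : 0 < α) : 0 < Real.tanh α := by
  rw [Real.tanh_eq_sinh_div_cosh]
  exact div_pos (Real.sinh_pos_iff.2 hα) (Real.cosh_pos α)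

lemma tanh_lt_one' (α : ℝ) : Real.tanh α < 1 := by
  rw [Real.tanh_eq_sinh_div_cosh]
  exact (div_lt_one (Real.cosh_pos α)).2 (Real.sinh_lt_cosh α)

lemma c0_pos {α : ℝ} (hα : 0 < α) : 0 < c₀ α :=
  Real.sqrt_pos.2 (tanh_pos' hα)

lemma c0_sq {α : ℝ} (hα : 0 < α) : c₀ α ^ 2 = Real.tanh α :=
  Real.sq_sqrt (tanh_pos' hα).le

lemma c0_lt_one {α : ℝ} (hα : 0 < α) : c₀ α < 1 := by
  have := tanh_lt_one' α
  nlinarith [c0_sq hα, c0_pos hα]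

lemma key_identity {α : ℝ} (hα : 0 < α) :
    cg α * A3m1 α - B3m1 α = -(e₂ α) / 2 := by
  have hc := c0_pos hα
  have hc' : c₀ α ≠ 0 := ne_of_gt hc
  unfold cg A3m1 B3m1 e₂ T2m1
  field_simp
  ring

lemma e2_pos {α : ℝ} (hα : 0 < α) : 0 < e₂ α := by
  have hc := c0_pos hα
  have hc1 := c0_lt_one hα
  unfold e₂ T2m1
  set c := c₀ α
  have hden : 0 < 4 * c ^ 3 := by positivity
  apply mul_pos (by norm_num : (0:ℝ) < 4)
  apply div_pos _ hden
  have ht : c ^ 2 < 1 := by nlinarith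
  have key : (1 + 3 * c ^ 4) *
      (α ^ 2 - c ^ 2 * (-1 + α * c ^ 2) * (-2 * α + c ^ 2 + 3 * α * c ^ 4)) =
      (1 - c ^ 4) * ((1 + 3 * c ^ 4) * α - c ^ 2) ^ 2 + 4 * c ^ 8 := by ring
  nlinarith [key, mul_nonneg (by nlinarith : (0:ℝ) ≤ 1 - c ^ 4)
      (sq_nonneg ((1 + 3 * c ^ 4) * α - c ^ 2)),
    pow_pos hc 8, sq_nonneg (c ^ 2)]

/-- For `α > 0` with `e_BW(α) > 0`, the limit
`Λ₃ᴿ^(M)(α) = (8 e_BW/e₂)(c_g A₃,₋₁ − B₃,₋₁)` equals `−4 e_BW(α) < 0`;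
in particular it is nonzero. -/
theorem Lambda3RM_eq_neg_four_eBW (α : ℝ) (hα : 0 < α) (heBW : 0 < eBW α) :
    8 * eBW α / e₂ α * (cg α * A3m1 α - B3m1 α) = -4 * eBW α ∧
    8 * eBW α / e₂ α * (cg α * A3m1 α - B3m1 α) < 0 ∧
    8 * eBW α / e₂ α * (cg α * A3m1 α - B3m1 α) ≠ 0 := by
  have he2 : e₂ α ≠ 0 := ne_of_gt (e2_pos hα)
  have h : 8 * eBW α / e₂ α * (cg α * A3m1 α - B3m1 α) = -4 * eBW α := by
    rw [key_identity hα]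
    field_simp
    ring
  refine ⟨h, ?_, ?_⟩
  · rw [h]; linarith
  · rw [h]; intro h'; nlinarith
end

section
/- Let μ₁ > 0 and r₁ be real numbers, let β₀,₋₁ and β₀,₁ be nonzero complex numbers, and let λ₂ ∈ ℂ. Suppose the two solvability conditions 2β₀,₋₁(λ₂ − (i/2)r₁μ₁) + i(−β₀,₁ + ((1/4)μ₁² − 1)β₀,₋₁) = 0 and 2β₀,₁(λ₂ − (i/2)r₁μ₁) + i(β₀,₋₁ + (−(1/4)μ₁² + 1)β₀,₁) = 0 hold. Then (λ₂ − (i/2)r₁μ₁)² = μ₁²(8 − μ₁²)/64. In particular, if 0 < μ₁ < 2√2 then λ₂ − (i/2)r₁μ₁ = ±(μ₁/8)√(8 − μ₁²) is real and nonzero, so λ₂ has nonzero real part exactly when 0 < μ₁ < 2√2. -/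
open Complex

/-- Infinite-depth second-order solvability conditions: if `μ₁ > 0`, `r₁ ∈ ℝ`,
`β₀,₋₁, β₀,₁ ∈ ℂ` are nonzero, and `λ₂ ∈ ℂ` satisfies
`2β₀,₋₁(λ₂ − (i/2)r₁μ₁) + i(−β₀,₁ + ((1/4)μ₁² − 1)β₀,₋₁) = 0` and
`2β₀,₁(λ₂ − (i/2)r₁μ₁) + i(β₀,₋₁ + (−(1/4)μ₁² + 1)β₀,₁) = 0`, then
`(λ₂ − (i/2)r₁μ₁)² = μ₁²(8 − μ₁²)/64`; in particular, for `0 < μ₁ < 2√2`,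
`λ₂ − (i/2)r₁μ₁ = ±(μ₁/8)√(8 − μ₁²)` is real and nonzero, and `λ₂` has nonzero
real part exactly when `0 < μ₁ < 2√2`. -/
theorem infinite_depth_second_order (μ₁ r₁ : ℝ) (hμ₁ : 0 < μ₁)
    (βneg βpos : ℂ) (hβneg : βneg ≠ 0) (hβpos : βpos ≠ 0) (lam₂ : ℂ)
    (h1 : 2 * βneg * (lam₂ - (Complex.I / 2) * ((r₁ * μ₁ : ℝ) : ℂ))
        + Complex.I * (-βpos + ((1 / 4) * ((μ₁ : ℂ)) ^ 2 - 1) * βneg) = 0)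
    (h2 : 2 * βpos * (lam₂ - (Complex.I / 2) * ((r₁ * μ₁ : ℝ) : ℂ))
        + Complex.I * (βneg + (-(1 / 4) * ((μ₁ : ℂ)) ^ 2 + 1) * βpos) = 0) :
    (lam₂ - (Complex.I / 2) * ((r₁ * μ₁ : ℝ) : ℂ)) ^ 2
        = ((μ₁ ^ 2 * (8 - μ₁ ^ 2) / 64 : ℝ) : ℂ) ∧
    (μ₁ < 2 * Real.sqrt 2 →
      (lam₂ - (Complex.I / 2) * ((r₁ * μ₁ : ℝ) : ℂ)
          = ((μ₁ / 8 * Real.sqrt (8 - μ₁ ^ 2) : ℝ) : ℂ) ∨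
        lam₂ - (Complex.I / 2) * ((r₁ * μ₁ : ℝ) : ℂ)
          = -((μ₁ / 8 * Real.sqrt (8 - μ₁ ^ 2) : ℝ) : ℂ)) ∧
      lam₂ - (Complex.I / 2) * ((r₁ * μ₁ : ℝ) : ℂ) ≠ 0) ∧
    (lam₂.re ≠ 0 ↔ μ₁ < 2 * Real.sqrt 2) := by
  set X : ℂ := lam₂ - (Complex.I / 2) * ((r₁ * μ₁ : ℝ) : ℂ) with hX
  have hprod : βneg * βpos * (X ^ 2 - (μ₁ : ℂ) ^ 2 * (8 - (μ₁ : ℂ) ^ 2) / 64) = 0 := by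
    linear_combination ((2 * X + Complex.I * (1 - (1/4) * (μ₁ : ℂ) ^ 2)) * βpos / 4) * h1
      + (Complex.I * βpos / 4) * h2
      + (βneg * βpos * ((μ₁ : ℂ) ^ 2 * (-1/8) + (μ₁ : ℂ) ^ 4 * (1/64))) * Complex.I_sq
  have key : X ^ 2 = (μ₁ : ℂ) ^ 2 * (8 - (μ₁ : ℂ) ^ 2) / 64 := by
    have := mul_ne_zero hβneg hβpos
    rcases mul_eq_zero.1 hprod with h | h
    · exact absurd h this
    · exact sub_eq_zero.1 h
  have key' : X ^ 2 = ((μ₁ ^ 2 * (8 - μ₁ ^ 2) / 64 : ℝ) : ℂ) := by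
    rw [key]; push_cast; ring
  -- re of X equals re of lam₂
  have hre : X.re = lam₂.re := by
    simp [hX, Complex.sub_re, Complex.mul_re, Complex.div_re]
  refine ⟨key', ?_, ?_⟩
  · intro hlt
    have h8 : 0 < 8 - μ₁ ^ 2 := by
      nlinarith [Real.sq_sqrt (by norm_num : (0:ℝ) ≤ 2), Real.sqrt_nonneg 2]
    set s : ℝ := μ₁ / 8 * Real.sqrt (8 - μ₁ ^ 2) with hs
    have hspos : 0 < s := by
      apply mul_pos (by linarith) (Real.sqrt_pos.2 h8)
    have hs2 : (s : ℂ) ^ 2 = ((μ₁ ^ 2 * (8 - μ₁ ^ 2) / 64 : ℝ) : ℂ) := by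
      have : s ^ 2 = μ₁ ^ 2 * (8 - μ₁ ^ 2) / 64 := by
        rw [hs, mul_pow, Real.sq_sqrt h8.le]; ring
      push_cast [← this]; ring
    have hfac : (X - (s : ℂ)) * (X + (s : ℂ)) = 0 := by
      have := key'.trans hs2.symm
      linear_combination this
    have hcases : X = (s : ℂ) ∨ X = -(s : ℂ) := by
      rcases mul_eq_zero.1 hfac with h | h
      · exact Or.inl (sub_eq_zero.1 h)
      · exact Or.inr (eq_neg_of_add_eq_zero_left h)
    refine ⟨hcases, ?_⟩
    have hsne : ((s : ℝ) : ℂ) ≠ 0 := by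
      exact_mod_cast hspos.ne'
    rcases hcases with h | h
    · rw [h]; exact hsne
    · rw [h]; simpa using hsne
  · rw [← hre]
    constructor
    · intro hXre
      by_contra hge
      push_neg at hge
      have h8 : 8 - μ₁ ^ 2 ≤ 0 := by
        nlinarith [Real.sq_sqrt (by norm_num : (0:ℝ) ≤ 2), Real.sqrt_nonneg 2]
      have e1 : (X ^ 2).re = μ₁ ^ 2 * (8 - μ₁ ^ 2) / 64 := by
        rw [key']; exact Complex.ofReal_re _
      have e2 : (X ^ 2).im = 0 := by rw [key']; exact Complex.ofReal_im _
      rw [pow_two, Complex.mul_re] at e1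
      rw [pow_two, Complex.mul_im] at e2
      have hXim : X.im = 0 := by
        have : X.re * X.im = 0 := by linarith
        rcases mul_eq_zero.1 this with h | h
        · exact absurd h hXre
        · exact h
      rw [hXim] at e1
      nlinarith [mul_self_pos.mpr hXre, sq_nonneg μ₁]
    · intro hlt
      have h8 : 0 < 8 - μ₁ ^ 2 := by
        nlinarith [Real.sq_sqrt (by norm_num : (0:ℝ) ≤ 2), Real.sqrt_nonneg 2]
      set s : ℝ := μ₁ / 8 * Real.sqrt (8 - μ₁ ^ 2) with hs
      have hspos : 0 < s := mul_pos (by linarith) (Real.sqrt_pos.2 h8)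
      have hs2 : (s : ℂ) ^ 2 = ((μ₁ ^ 2 * (8 - μ₁ ^ 2) / 64 : ℝ) : ℂ) := by
        have : s ^ 2 = μ₁ ^ 2 * (8 - μ₁ ^ 2) / 64 := by
          rw [hs, mul_pow, Real.sq_sqrt h8.le]; ring
        push_cast [← this]; ring
      have hfac : (X - (s : ℂ)) * (X + (s : ℂ)) = 0 := by
        have := key'.trans hs2.symm
        linear_combination this
      rcases mul_eq_zero.1 hfac with h | h
      · have : X = (s : ℂ) := sub_eq_zero.1 h
        rw [this]; simpa using hspos.ne'
      · have : X = -(s : ℂ) := eq_neg_of_add_eq_zero_left h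
        rw [this]; simpa using hspos.ne'
end
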